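/- arXiv:1104.3335 — 3 statements merged into one kernel-verified Lean document; each statement's English description precedes it below -/
import Mathlib

section
/- Let p be a prime and let D = {D_n} be a proper dual family of sets of functions F_p^n → F_p. For every ε > 0 and η > 0 there exists n_0 such that for every n ≥ n_0 and every distributional function Γ : F_p^n → P(F_p), if F is a random function sampled from Γ (independently at each point), then Pr_F[ |‖e_p(F)‖_{u(D_n)} − ‖e_p(Γ)‖_{u(D_n)}| ≥ ε ] ≤ η. -/
open Filter Topology

noncomputable section

namespace Paper

/-- The average (expectation) of a complex-valued function over a finite type. -/
def expC {α : Type*} [Fintype α] (f : α → ℂ) : ℂ := (∑ x, f x) / (Fintype.card α : ℂ)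

/-- The average (expectation) of a real-valued function over a finite type. -/
def expR {α : Type*} [Fintype α] (f : α → ℝ) : ℝ := (∑ x, f x) / (Fintype.card α : ℝ)

variable (p : ℕ) [NeZero p]

/-- `e_p(m) = exp(2 π i m / p)`. -/
def ep (m : ZMod p) : ℂ :=
  Complex.exp (2 * (Real.pi : ℂ) * Complex.I * (m.val : ℂ) / (p : ℂ))

/-- The Gowers uniformity norm `‖f‖_{U^k}` of `f : F_p^n → ℂ`. -/
def gowersNorm (n k : ℕ) (f : (Fin n → ZMod p) → ℂ) : ℝ :=
  (‖expC (fun xy : (Fin n → ZMod p) × (Fin k → Fin n → ZMod p) =>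
      ∏ S : Finset (Fin k),
        (fun z => (starRingEnd ℂ) z)^[k - S.card] (f (xy.1 + ∑ i ∈ S, xy.2 i)))‖) ^
    (((2 : ℝ) ^ k)⁻¹)

/-- Inner product `⟨f, g⟩ = 𝔼[f ⬝ conj g]`. -/
def inn (n : ℕ) (f g : (Fin n → ZMod p) → ℂ) : ℂ :=
  expC (fun x => f x * (starRingEnd ℂ) (g x))

/-- Correlation norm `‖f‖_{u(D)}` for a set `D` of complex-valued functions. -/
def uNormC (n : ℕ) (D : Set ((Fin n → ZMod p) → ℂ)) (f : (Fin n → ZMod p) → ℂ) : ℝ :=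
  ⨆ g ∈ D, ‖inn p n f g‖

/-- Correlation norm `‖f‖_{u(D)}` for a set `D` of `F_p`-valued functions. -/
def uNormF (n : ℕ) (D : Set ((Fin n → ZMod p) → ZMod p)) (f : (Fin n → ZMod p) → ℂ) : ℝ :=
  ⨆ g ∈ D, ‖inn p n f (fun x => ep p (g x))‖

/-- The bias of `f : F_p^n → F_p`. -/
def biasF (n : ℕ) (f : (Fin n → ZMod p) → ZMod p) : ℝ :=
  ‖expC (fun x => ep p (f x))‖

/-- Evaluation of a linear form `L ∈ F_p^k` at `X ∈ (F_p^n)^k`. -/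
def applyLF (n k : ℕ) (L : Fin k → ZMod p) (X : Fin k → Fin n → ZMod p) :
    Fin n → ZMod p := ∑ i, L i • X i

/-- `t_𝓛(f)` for a system of linear forms given as a tuple `L`. -/
def tL (n k m : ℕ) (L : Fin m → Fin k → ZMod p) (f : (Fin n → ZMod p) → ℂ) : ℂ :=
  expC (fun X : Fin k → Fin n → ZMod p => ∏ i, f (applyLF p n k (L i) X))

/-- `t_𝓛(f)` for a real-valued function. -/
def tLR (n k m : ℕ) (L : Fin m → Fin k → ZMod p) (f : (Fin n → ZMod p) → ℝ) : ℝ :=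
  expR (fun X : Fin k → Fin n → ZMod p => ∏ i, f (applyLF p n k (L i) X))

/-- `t_{𝓛,α}(f)`, the average with conjugations `α`. -/
def tLA (n k m : ℕ) (L : Fin m → Fin k → ZMod p) (α : Fin m → Bool)
    (f : (Fin n → ZMod p) → ℂ) : ℂ :=
  expC (fun X : Fin k → Fin n → ZMod p =>
    ∏ i, if α i then (starRingEnd ℂ) (f (applyLF p n k (L i) X))
      else f (applyLF p n k (L i) X))

/-- `t*_{𝓛,β}(f)`, the average with coefficients `β ∈ F_p^m`. -/
def tLstar (n k m : ℕ) (L : Fin m → Fin k → ZMod p) (β : Fin m → ZMod p)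
    (f : (Fin n → ZMod p) → ZMod p) : ℂ :=
  expC (fun X : Fin k → Fin n → ZMod p => ep p (∑ i, β i * f (applyLF p n k (L i) X)))

/-- A system of linear forms is homogeneous if, for uniform `X`, the joint distribution of
`(L₁(X),…,L_m(X))` is invariant under simultaneous translation by any constant `c`. -/
def IsHomogeneous (k m : ℕ) (L : Fin m → Fin k → ZMod p) : Prop :=
  ∀ (n : ℕ) (c : Fin n → ZMod p) (y : Fin m → Fin n → ZMod p),
    {X : Fin k → Fin n → ZMod p | ∀ i, applyLF p n k (L i) X = y i}.ncard =
    {X : Fin k → Fin n → ZMod p | ∀ i, applyLF p n k (L i) X + c = y i}.ncard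

/-- Cauchy–Schwarz complexity at most `s`. -/
def CSComplexityLE (k m : ℕ) (L : Fin m → Fin k → ZMod p) (s : ℕ) : Prop :=
  ∀ i : Fin m, ∃ φ : Fin m → Fin (s + 1), ∀ c : Fin (s + 1),
    L i ∉ Submodule.span (ZMod p) (L '' {j | j ≠ i ∧ φ j = c})

/-- True complexity at most `d`. -/
def TrueComplexityLE (k m : ℕ) (L : Fin m → Fin k → ZMod p) (d : ℕ) : Prop :=
  ∀ ε : ℝ, 0 < ε → ∃ δ : ℝ, 0 < δ ∧ ∀ (n : ℕ) (f : (Fin n → ZMod p) → ℂ),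
    (∀ x, ‖f x‖ ≤ 1) → gowersNorm p n (d + 1) f ≤ δ →
      ‖tL p n k m L f‖ ≤ ε

/-- True complexity exactly `d`. -/
def TrueComplexityEq (k m : ℕ) (L : Fin m → Fin k → ZMod p) (d : ℕ) : Prop :=
  TrueComplexityLE p k m L d ∧ ∀ e, e < d → ¬ TrueComplexityLE p k m L e

/-- Iterated additive derivative of `P : F_p^n → F_p` in a list of directions. -/
def derivList (n : ℕ) :
    List (Fin n → ZMod p) → ((Fin n → ZMod p) → ZMod p) → ((Fin n → ZMod p) → ZMod p)
  | [], P => P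
  | y :: ys, P => derivList n ys (fun x => P (x + y) - P x)

/-- `P` is a polynomial of degree at most `d`: all `(d+1)`-fold derivatives vanish. -/
def DegLE (n : ℕ) (P : (Fin n → ZMod p) → ZMod p) (d : ℕ) : Prop :=
  ∀ ys : List (Fin n → ZMod p), ys.length = d + 1 → derivList p n ys P = 0

/-- `P` is a polynomial of degree exactly `d`. -/
def DegEq (n : ℕ) (P : (Fin n → ZMod p) → ZMod p) (d : ℕ) : Prop :=
  DegLE p n P d ∧ ∀ e, e < d → ¬ DegLE p n P e

/-- `rank(P) > r`: `P` cannot be written as a function of `r` polynomials of degree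
at most `deg(P) − 1`. -/
def RankGT (n : ℕ) (P : (Fin n → ZMod p) → ZMod p) (r : ℕ) : Prop :=
  ∀ d : ℕ, DegEq p n P d →
    ¬ ∃ (Q : Fin r → (Fin n → ZMod p) → ZMod p) (Γ : (Fin r → ZMod p) → ZMod p),
      (∀ i, DegLE p n (Q i) (d - 1)) ∧ ∀ x, P x = Γ (fun i => Q i x)

/-- `rank(P) ≥ r`. -/
def RankGE (n : ℕ) (P : (Fin n → ZMod p) → ZMod p) (r : ℕ) : Prop :=
  ∀ r' : ℕ, r' < r → RankGT p n P r'

/-- Extension of a function on `F_p^n` to `F_p^m` (`m ≥ n`) by ignoring the extra coordinates. -/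
def extendFun {β : Type*} {n m : ℕ} (h : n ≤ m) (g : (Fin n → ZMod p) → β) :
    (Fin m → ZMod p) → β := fun x => g (fun i => x (Fin.castLE h i))

/-- (A1) Consistency for `F_p`-valued families. -/
def ConsistentF (D : ∀ n : ℕ, Set ((Fin n → ZMod p) → ZMod p)) : Prop :=
  ∀ (n m : ℕ) (h : n ≤ m), ∀ g ∈ D n, extendFun p h g ∈ D m

/-- Consistency for unit-disc-valued families: `D_n ⊆ D_{n+1}`. -/
def ConsistentC (D : ∀ n : ℕ, Set ((Fin n → ZMod p) → ℂ)) : Prop :=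
  ∀ n : ℕ, ∀ g ∈ D n, extendFun p (Nat.le_succ n) g ∈ D (n + 1)

/-- (A2) Affine invariance. -/
def AffineInvariant (D : ∀ n : ℕ, Set ((Fin n → ZMod p) → ZMod p)) : Prop :=
  ∀ n : ℕ, ∀ g ∈ D n,
    ∀ (T : (Fin n → ZMod p) ≃ₗ[ZMod p] (Fin n → ZMod p)) (c : Fin n → ZMod p),
      (fun x => g (T x + c)) ∈ D n

/-- (A3) Sparsity: `|D_n| ≤ p^{ε p^n}` for every `ε > 0` and all large enough `n`. -/
def Sparse (D : ∀ n : ℕ, Set ((Fin n → ZMod p) → ZMod p)) : Prop :=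
  ∀ ε : ℝ, 0 < ε → ∃ n₀ : ℕ, ∀ n, n₀ ≤ n →
    (Nat.card (D n) : ℝ) ≤ (p : ℝ) ^ (ε * (p : ℝ) ^ n)

/-- A proper dual family: consistent, affine invariant and sparse. -/
def ProperDual (D : ∀ n : ℕ, Set ((Fin n → ZMod p) → ZMod p)) : Prop :=
  ConsistentF p D ∧ AffineInvariant p D ∧ Sparse p D

/-- The family `D` is correlation testable with `q` queries. -/
def CorrTestable (q : ℕ) (D : ∀ n : ℕ, Set ((Fin n → ZMod p) → ZMod p)) : Prop :=
  ∃ (Γ : (Fin q → ZMod p) → Bool) (μ : ∀ n : ℕ, (Fin q → Fin n → ZMod p) → ℝ),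
    (∀ n x, 0 ≤ μ n x) ∧ (∀ n, ∑ x, μ n x = 1) ∧
    ∀ ε : ℝ, 0 < ε → ∃ (δ θm θp : ℝ) (n₀ : ℕ),
      0 < δ ∧ δ < ε ∧ 0 ≤ θm ∧ θm < θp ∧ θp ≤ 1 ∧
      ∀ n, n₀ < n → ∀ f : (Fin n → ZMod p) → ZMod p,
        (ε ≤ uNormF p n (D n) (fun x => ep p (f x)) →
          θp ≤ ∑ x, μ n x * (if Γ (fun i => f (x i)) = true then 1 else 0)) ∧
        (uNormF p n (D n) (fun x => ep p (f x)) ≤ δ →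
          (∑ x, μ n x * (if Γ (fun i => f (x i)) = true then 1 else 0)) ≤ θm)

/-- Strong correlation testability by linear systems with true complexity `d` and
Cauchy–Schwarz complexity `s`. -/
def StronglyCorrTestable (D : ∀ n : ℕ, Set ((Fin n → ZMod p) → ℂ))
    (d s : ℕ) : Prop :=
  ∀ ε : ℝ, 0 < ε → ∃ (δ : ℝ) (n₀ ℓ : ℕ) (kk mm : Fin ℓ → ℕ)
      (L : ∀ i, Fin (mm i) → Fin (kk i) → ZMod p) (α : ∀ i, Fin (mm i) → Bool),
    0 < δ ∧ δ < ε ∧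
    (∀ i, Function.Injective (L i)) ∧
    (∀ i, IsHomogeneous p (kk i) (mm i) (L i)) ∧
    (∀ i, TrueComplexityLE p (kk i) (mm i) (L i) d) ∧
    (∀ i, CSComplexityLE p (kk i) (mm i) (L i) s) ∧
    Disjoint
      (closure {v : Fin ℓ → ℂ | ∃ (n : ℕ) (f : (Fin n → ZMod p) → ℂ),
        n₀ ≤ n ∧ (∀ x, ‖f x‖ ≤ 1) ∧ ε ≤ uNormC p n (D n) f ∧
        v = fun i => tLA p n (kk i) (mm i) (L i) (α i) f})
      (closure {v : Fin ℓ → ℂ | ∃ (n : ℕ) (f : (Fin n → ZMod p) → ℂ),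
        n₀ ≤ n ∧ (∀ x, ‖f x‖ ≤ 1) ∧ uNormC p n (D n) f ≤ δ ∧
        v = fun i => tLA p n (kk i) (mm i) (L i) (α i) f})

/-- `k ∈ S(D)`: there are polynomials of degree exactly `k` and arbitrarily high rank
with noticeable correlation with `D`. -/
def memS (D : ∀ n : ℕ, Set ((Fin n → ZMod p) → ℂ)) (k : ℕ) : Prop :=
  1 ≤ k ∧ ∀ r : ℕ → ℕ, Monotone r → ∃ n₀ a : ℕ, ∀ n, n₀ ≤ n →
    ∃ P : (Fin n → ZMod p) → ZMod p, DegEq p n P k ∧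
      (1 : ℝ) / (a : ℝ) ≤ uNormC p n (D n) (fun x => ep p (P x)) ∧
      RankGT p n P (r a)

/-- `Γ x` is a probability distribution on `F_p` for every `x`. -/
def IsDist (n : ℕ) (Γ : (Fin n → ZMod p) → ZMod p → ℝ) : Prop :=
  (∀ x c, 0 ≤ Γ x c) ∧ ∀ x, ∑ c, Γ x c = 1

/-- `a_c(μ) = E_{z ∼ μ}[e_p(c z)]`. -/
def aC (c : ZMod p) (μ : ZMod p → ℝ) : ℂ :=
  ∑ z : ZMod p, (μ z : ℂ) * ep p (c * z)

/-- `t*_{𝓛,β}(Γ)` for a distributional function `Γ`. -/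
def tLstarDist (n k m : ℕ) (L : Fin m → Fin k → ZMod p) (β : Fin m → ZMod p)
    (Γ : (Fin n → ZMod p) → ZMod p → ℝ) : ℂ :=
  expC (fun X : Fin k → Fin n → ZMod p => ∏ i, aC p (β i) (Γ (applyLF p n k (L i) X)))

/-- The probability of sampling the function `F` from the distributional function `Γ`
(independently at each point). -/
def probFun (n : ℕ) (Γ : (Fin n → ZMod p) → ZMod p → ℝ)
    (F : (Fin n → ZMod p) → ZMod p) : ℝ :=
  ∏ x, Γ x (F x)

/-- Conditional expectation of a distributional function w.r.t. the polynomial factor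
defined by `P₁, …, P_C`. -/
def condExpDist (n C : ℕ) (P : Fin C → (Fin n → ZMod p) → ZMod p)
    (Γ : (Fin n → ZMod p) → ZMod p → ℝ) : (Fin n → ZMod p) → ZMod p → ℝ :=
  fun x c =>
    (∑ y ∈ Finset.univ.filter (fun y : Fin n → ZMod p => ∀ j, P j y = P j x), Γ y c) /
    ((Finset.univ.filter (fun y : Fin n → ZMod p => ∀ j, P j y = P j x)).card : ℝ)

/-- Connectivity of a system of linear forms given as a tuple. -/
def ConnectedSystem (k m : ℕ) (L : Fin m → Fin k → ZMod p) : Prop :=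
  ∀ S : Finset (Fin m), S.Nonempty → S ≠ Finset.univ →
    Submodule.span (ZMod p) (L '' ↑S) ⊓ Submodule.span (ZMod p) (L '' ↑(Sᶜ)) ≠ ⊥

/-- Isomorphism of two systems of linear forms (given as injective tuples):
a bijection preserving all linear relations, i.e. extending to an invertible linear map
between the spans. -/
def SystemsIso {k₁ m₁ k₂ m₂ : ℕ}
    (L₁ : Fin m₁ → Fin k₁ → ZMod p) (L₂ : Fin m₂ → Fin k₂ → ZMod p) : Prop :=
  ∃ σ : Fin m₁ ≃ Fin m₂, ∀ c : Fin m₁ → ZMod p,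
    (∑ i, c i • L₁ i) = 0 ↔ (∑ i, c i • L₂ (σ i)) = 0

/-- Connectivity of a system of linear forms given as a finite set. -/
def ConnectedFinset {k : ℕ} (𝓛 : Finset (Fin k → ZMod p)) : Prop :=
  ∀ S : Finset (Fin k → ZMod p), S ⊆ 𝓛 → S.Nonempty → S ≠ 𝓛 →
    Submodule.span (ZMod p) (S : Set (Fin k → ZMod p)) ⊓
      Submodule.span (ZMod p) ((𝓛 \ S : Finset (Fin k → ZMod p)) : Set (Fin k → ZMod p)) ≠ ⊥

/-- Isomorphism of two systems of linear forms given as finite sets. -/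
def FinsetIso {k₁ k₂ : ℕ}
    (A : Finset (Fin k₁ → ZMod p)) (B : Finset (Fin k₂ → ZMod p)) : Prop :=
  ∃ e : {x // x ∈ A} ≃ {x // x ∈ B}, ∀ c : {x // x ∈ A} → ZMod p,
    (∑ x : {x // x ∈ A}, c x • (x : Fin k₁ → ZMod p)) = 0 ↔
    (∑ x : {x // x ∈ A}, c x • ((e x : Fin k₂ → ZMod p))) = 0

/-- Isomorphism of two 1-flagged systems of linear forms: a relation-preserving bijection
whose linear extension carries one flag to the other. -/
def FlaggedIso {k₁ k₂ : ℕ}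
    (A : Finset (Fin k₁ → ZMod p)) (M₁ : Fin k₁ → ZMod p)
    (B : Finset (Fin k₂ → ZMod p)) (M₂ : Fin k₂ → ZMod p) : Prop :=
  ∃ e : {x // x ∈ A} ≃ {x // x ∈ B},
    (∀ c : {x // x ∈ A} → ZMod p,
      (∑ x : {x // x ∈ A}, c x • (x : Fin k₁ → ZMod p)) = 0 ↔
      (∑ x : {x // x ∈ A}, c x • ((e x : Fin k₂ → ZMod p))) = 0) ∧
    (∀ c : {x // x ∈ A} → ZMod p,
      (∑ x : {x // x ∈ A}, c x • (x : Fin k₁ → ZMod p)) = M₁ →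
      (∑ x : {x // x ∈ A}, c x • ((e x : Fin k₂ → ZMod p))) = M₂)

/-- The underlying (unflagged) system of the product of two 1-flagged systems,
relative to the chosen surjection `T`. -/
def productSystem {k₀ k₁ : ℕ}
    (𝓛₀ : Finset (Fin k₀ → ZMod p)) (𝓛₁ : Finset (Fin k₁ → ZMod p))
    (T : (Fin (k₀ + k₁) → ZMod p) →ₗ[ZMod p] (Fin (k₀ + k₁ - 1) → ZMod p)) :
    Finset (Fin (k₀ + k₁ - 1) → ZMod p) :=
  (𝓛₀.image (fun L => Fin.append L (0 : Fin k₁ → ZMod p)) ∪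
    𝓛₁.image (fun L => Fin.append (0 : Fin k₀ → ZMod p) L)).image (fun v => T v)

/-- `f^{(𝓛∖{Lᵢ})^{Lᵢ}}(x)`: conditional average of `∏_{j ≠ i} f(L_j(X))` given `Lᵢ(X) = x`. -/
def flagCondAvg (n k m : ℕ) (L : Fin m → Fin k → ZMod p) (i : Fin m)
    (f : (Fin n → ZMod p) → ℂ) (x : Fin n → ZMod p) : ℂ :=
  (∑ X ∈ Finset.univ.filter (fun X : Fin k → Fin n → ZMod p => applyLF p n k (L i) X = x),
      ∏ j ∈ Finset.univ.erase i, f (applyLF p n k (L j) X)) /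
  (((Finset.univ.filter
      (fun X : Fin k → Fin n → ZMod p => applyLF p n k (L i) X = x)).card : ℂ))

/-- `f^{∂𝓛}(x) = Σ_{L ∈ 𝓛} f^{(𝓛∖{L})^L}(x)`. -/
def partialL (n k m : ℕ) (L : Fin m → Fin k → ZMod p)
    (f : (Fin n → ZMod p) → ℂ) (x : Fin n → ZMod p) : ℂ :=
  ∑ i, flagCondAvg p n k m L i f x

/-- Real-valued version of `flagCondAvg`. -/
def flagCondAvgR (n k m : ℕ) (L : Fin m → Fin k → ZMod p) (i : Fin m)
    (f : (Fin n → ZMod p) → ℝ) (x : Fin n → ZMod p) : ℝ :=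
  (∑ X ∈ Finset.univ.filter (fun X : Fin k → Fin n → ZMod p => applyLF p n k (L i) X = x),
      ∏ j ∈ Finset.univ.erase i, f (applyLF p n k (L j) X)) /
  (((Finset.univ.filter
      (fun X : Fin k → Fin n → ZMod p => applyLF p n k (L i) X = x)).card : ℝ))

/-- Real-valued version of `partialL`. -/
def partialLR (n k m : ℕ) (L : Fin m → Fin k → ZMod p)
    (f : (Fin n → ZMod p) → ℝ) (x : Fin n → ZMod p) : ℝ :=
  ∑ i, flagCondAvgR p n k m L i f x

/-- `t_𝓛` viewed as a formal polynomial in the variables `{f(x) : x ∈ F_p^n}`. -/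
def tLPoly (n k m : ℕ) (L : Fin m → Fin k → ZMod p) :
    MvPolynomial (Fin n → ZMod p) ℂ :=
  MvPolynomial.C (((p : ℂ) ^ (n * k))⁻¹) *
    ∑ X : Fin k → Fin n → ZMod p, ∏ i, MvPolynomial.X (applyLF p n k (L i) X)

/-! For a fixed `g ∈ D_n`, the difference `⟨e_p(F), e_p(g)⟩ - ⟨e_p(Γ), e_p(g)⟩` is `p⁻ⁿ` times a
sum of `pⁿ` independent, centred terms of modulus at most `2`, so a Chernoff bound makes it at
least `ε/2` with probability `exp(-Ω(pⁿ))`. Both correlation norms are suprema over `D_n`, hence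
they can differ by `ε` only if this happens for some `g ∈ D_n`, and the sparsity bound
`|D_n| ≤ exp(o(pⁿ))` is exactly what the union bound over `D_n` needs. -/

section PiProb

open Real

variable {ι κ : Type*} [Fintype ι]

def piProb (Γ : ι → κ → ℝ) (A : Finset (ι → κ)) : ℝ := ∑ F ∈ A, ∏ i, Γ i (F i)

variable {Γ : ι → κ → ℝ}

lemma piProb_nonneg (hΓ : ∀ i k, 0 ≤ Γ i k) (A : Finset (ι → κ)) : 0 ≤ piProb Γ A :=
  Finset.sum_nonneg fun F _ => Finset.prod_nonneg fun i _ => hΓ i (F i)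

lemma piProb_mono (hΓ : ∀ i k, 0 ≤ Γ i k) {A B : Finset (ι → κ)} (h : A ⊆ B) :
    piProb Γ A ≤ piProb Γ B :=
  Finset.sum_le_sum_of_subset_of_nonneg h fun F _ _ => Finset.prod_nonneg fun i _ => hΓ i (F i)

section Union

variable [DecidableEq κ]

lemma piProb_union_le (hΓ : ∀ i k, 0 ≤ Γ i k) (A B : Finset (ι → κ)) :
    piProb Γ (A ∪ B) ≤ piProb Γ A + piProb Γ B := by
  rw [piProb, piProb, piProb, ← Finset.sum_union_inter]
  exact le_add_of_nonneg_right (piProb_nonneg hΓ _)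

lemma piProb_biUnion_le {α : Type*} [DecidableEq α] (hΓ : ∀ i k, 0 ≤ Γ i k)
    (s : Finset α) (A : α → Finset (ι → κ)) :
    piProb Γ (s.biUnion A) ≤ ∑ a ∈ s, piProb Γ (A a) := by
  induction s using Finset.induction_on with
  | empty => simp [piProb]
  | insert a s ha ih =>
    rw [Finset.biUnion_insert, Finset.sum_insert ha]
    exact (piProb_union_le hΓ _ _).trans (by gcongr)

end Union

variable [DecidableEq ι] [Fintype κ]

lemma sum_mul_exp_le_exp_sq {μ u : κ → ℝ} {B l : ℝ} (hμ0 : ∀ k, 0 ≤ μ k) (hμ1 : ∑ k, μ k = 1)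
    (hu : ∀ k, |u k| ≤ B) (hmean : ∑ k, μ k * u k = 0) (hl : 0 ≤ l) (hlB : l * B ≤ 1) :
    ∑ k, μ k * exp (l * u k) ≤ exp (l ^ 2 * B ^ 2) := by
  have hsq : ∀ k, (l * u k) ^ 2 ≤ l ^ 2 * B ^ 2 := fun k => by
    rw [mul_pow, ← sq_abs (u k)]
    gcongr
    exact hu k
  calc ∑ k, μ k * exp (l * u k)
      ≤ ∑ k, μ k * (1 + l * u k + l ^ 2 * B ^ 2) := by
        gcongr with k
        · exact hμ0 k
        have hlu : |l * u k| ≤ 1 := by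
          rw [abs_mul, abs_of_nonneg hl]
          exact (mul_le_mul_of_nonneg_left (hu k) hl).trans hlB
        linarith [(abs_le.mp (abs_exp_sub_one_sub_id_le hlu)).2, hsq k]
    _ = 1 + l ^ 2 * B ^ 2 := by
        simp only [mul_add, Finset.sum_add_distrib, ← Finset.sum_mul, hμ1, mul_left_comm _ l,
          ← Finset.mul_sum, hmean]
        ring
    _ ≤ exp (l ^ 2 * B ^ 2) := by linarith [add_one_le_exp (l ^ 2 * B ^ 2)]

lemma piProb_sum_ge_le_exp {u : ι → κ → ℝ} {B l : ℝ} (hΓ0 : ∀ i k, 0 ≤ Γ i k)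
    (hΓ1 : ∀ i, ∑ k, Γ i k = 1) (hu : ∀ i k, |u i k| ≤ B)
    (hmean : ∀ i, ∑ k, Γ i k * u i k = 0) (hl : 0 ≤ l) (hlB : l * B ≤ 1) (T : ℝ) :
    piProb Γ {F : ι → κ | T ≤ ∑ i, u i (F i)} ≤
      exp (-(l * T) + l ^ 2 * B ^ 2 * Fintype.card ι) := by
  have hprob : ∀ F : ι → κ, 0 ≤ ∏ i, Γ i (F i) := fun F =>
    Finset.prod_nonneg fun i _ => hΓ0 i (F i)
  calc piProb Γ {F : ι → κ | T ≤ ∑ i, u i (F i)}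
      ≤ ∑ F ∈ {F : ι → κ | T ≤ ∑ i, u i (F i)},
          (∏ i, Γ i (F i)) * exp (l * (∑ i, u i (F i) - T)) := by
        unfold piProb
        exact Finset.sum_le_sum fun F hF => le_mul_of_one_le_right (hprob F)
          (one_le_exp (mul_nonneg hl (sub_nonneg.2 (Finset.mem_filter.1 hF).2)))
    _ ≤ ∑ F : ι → κ, (∏ i, Γ i (F i)) * exp (l * (∑ i, u i (F i) - T)) :=
        Finset.sum_le_sum_of_subset_of_nonneg (Finset.subset_univ _)
          fun F _ _ => mul_nonneg (hprob F) (exp_pos _).le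
    _ = exp (-(l * T)) * ∏ i, ∑ k, Γ i k * exp (l * u i k) := by
        rw [Fintype.prod_sum, Finset.mul_sum]
        refine Finset.sum_congr rfl fun F _ => ?_
        rw [Finset.prod_mul_distrib, ← exp_sum, mul_sub, Finset.mul_sum, sub_eq_add_neg, exp_add]
        ring
    _ ≤ exp (-(l * T)) * ∏ _i : ι, exp (l ^ 2 * B ^ 2) := by
        refine mul_le_mul_of_nonneg_left (Finset.prod_le_prod (fun i _ => ?_) fun i _ => ?_)
          (exp_pos _).le
        · exact Finset.sum_nonneg fun k _ => mul_nonneg (hΓ0 i k) (exp_pos _).le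
        · exact sum_mul_exp_le_exp_sq (hΓ0 i) (hΓ1 i) (hu i) (hmean i) hl hlB
    _ = exp (-(l * T) + l ^ 2 * B ^ 2 * Fintype.card ι) := by
        rw [Finset.prod_const, Finset.card_univ, ← exp_nat_mul, ← exp_add]
        ring_nf

lemma exists_norm_le_two_mul_re_mul (z : ℂ) :
    ∃ ζ ∈ ({1, -1, Complex.I, -Complex.I} : Finset ℂ), ‖z‖ ≤ 2 * (ζ * z).re := by
  have hz := Complex.norm_le_abs_re_add_abs_im z
  simp only [Finset.mem_insert, Finset.mem_singleton, exists_eq_or_imp, exists_eq_left,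
    one_mul, neg_mul, Complex.neg_re, Complex.I_mul_re]
  rcases le_total |z.re| |z.im| with h | h <;>
    rcases abs_cases z.re with ⟨hr, -⟩ | ⟨hr, -⟩ <;>
    rcases abs_cases z.im with ⟨hi, -⟩ | ⟨hi, -⟩
  all_goals first
    | (left; linarith) | (right; left; linarith) | (right; right; left; linarith)
    | (right; right; right; linarith)

lemma piProb_norm_sum_ge_le_four_exp [DecidableEq κ] {w : ι → κ → ℂ} {B l : ℝ}
    (hΓ0 : ∀ i k, 0 ≤ Γ i k) (hΓ1 : ∀ i, ∑ k, Γ i k = 1) (hw : ∀ i k, ‖w i k‖ ≤ B)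
    (hmean : ∀ i, ∑ k, (Γ i k : ℂ) * w i k = 0) (hl : 0 ≤ l) (hlB : l * B ≤ 1) (T : ℝ) :
    piProb Γ {F : ι → κ | 2 * T ≤ ‖∑ i, w i (F i)‖} ≤
      4 * exp (-(l * T) + l ^ 2 * B ^ 2 * Fintype.card ι) := by
  set s : Finset ℂ := {1, -1, Complex.I, -Complex.I}
  have hs : ∀ ζ ∈ s, ‖ζ‖ = 1 := by
    intro ζ hζ
    simp only [s, Finset.mem_insert, Finset.mem_singleton] at hζ
    rcases hζ with rfl | rfl | rfl | rfl <;> simp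
  have hcover : ({F : ι → κ | 2 * T ≤ ‖∑ i, w i (F i)‖} : Finset (ι → κ)) ⊆
      s.biUnion fun ζ => {F : ι → κ | T ≤ ∑ i, (ζ * w i (F i)).re} := by
    intro F hF
    rw [Finset.mem_filter] at hF
    obtain ⟨ζ, hζ, hle⟩ := exists_norm_le_two_mul_re_mul (∑ i, w i (F i))
    rw [Finset.mul_sum, Complex.re_sum] at hle
    exact Finset.mem_biUnion.2 ⟨ζ, hζ, Finset.mem_filter.2 ⟨Finset.mem_univ _, by linarith⟩⟩
  have hbound : ∀ ζ ∈ s, piProb Γ {F : ι → κ | T ≤ ∑ i, (ζ * w i (F i)).re} ≤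
      exp (-(l * T) + l ^ 2 * B ^ 2 * Fintype.card ι) := by
    intro ζ hζ
    refine piProb_sum_ge_le_exp (u := fun i k => (ζ * w i k).re) hΓ0 hΓ1 (fun i k => ?_)
      (fun i => ?_) hl hlB T
    · calc |(ζ * w i k).re| ≤ ‖ζ * w i k‖ := Complex.abs_re_le_norm _
        _ ≤ B := by rw [norm_mul, hs ζ hζ, one_mul]; exact hw i k
    · have h := congrArg (fun z => (ζ * z).re) (hmean i)
      simpa only [Finset.mul_sum, Complex.re_sum, mul_left_comm ζ, Complex.re_ofReal_mul,
        mul_zero, Complex.zero_re] using h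
  calc piProb Γ {F : ι → κ | 2 * T ≤ ‖∑ i, w i (F i)‖}
      ≤ ∑ ζ ∈ s, piProb Γ {F : ι → κ | T ≤ ∑ i, (ζ * w i (F i)).re} :=
        (piProb_mono hΓ0 hcover).trans (piProb_biUnion_le hΓ0 s _)
    _ ≤ ∑ _ζ ∈ s, exp (-(l * T) + l ^ 2 * B ^ 2 * Fintype.card ι) := Finset.sum_le_sum hbound
    _ ≤ 4 * exp (-(l * T) + l ^ 2 * B ^ 2 * Fintype.card ι) := by
        rw [Finset.sum_const, nsmul_eq_mul]
        gcongr
        exact_mod_cast Finset.card_le_four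

end PiProb

lemma abs_biSup_sub_biSup_le {α : Type*} [Finite α] (S : Set α) {a b : α → ℝ}
    (ha : ∀ g, 0 ≤ a g) (hb : ∀ g, 0 ≤ b g) {δ : ℝ} (hδ : 0 ≤ δ)
    (h : ∀ g ∈ S, |a g - b g| ≤ δ) :
    |(⨆ g ∈ S, a g) - ⨆ g ∈ S, b g| ≤ δ := by
  have key : ∀ a b : α → ℝ, (∀ g, 0 ≤ b g) → (∀ g ∈ S, a g ≤ b g + δ) →
      ⨆ g ∈ S, a g ≤ (⨆ g ∈ S, b g) + δ := by
    intro a b hb h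
    have hbdd : BddAbove (Set.range fun g => ⨆ _ : g ∈ S, b g) :=
      (Set.finite_range _).bddAbove
    have hB : 0 ≤ ⨆ g ∈ S, b g := Real.iSup_nonneg fun g => Real.iSup_nonneg fun _ => hb g
    refine Real.iSup_le (fun g => Real.iSup_le (fun hg => ?_) (by linarith)) (by linarith)
    have := le_ciSup hbdd g
    rw [ciSup_pos hg] at this
    linarith [h g hg]
  rw [abs_sub_le_iff]
  constructor
  · linarith [key a b hb fun g hg => by linarith [(abs_sub_le_iff.1 (h g hg)).1]]
  · linarith [key b a ha fun g hg => by linarith [(abs_sub_le_iff.1 (h g hg)).2]]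

lemma norm_ep {p : ℕ} (m : ZMod p) : ‖ep p m‖ = 1 := by
  rw [ep, show 2 * (Real.pi : ℂ) * Complex.I * (m.val : ℂ) / (p : ℂ)
      = ((2 * Real.pi * m.val / p : ℝ) : ℂ) * Complex.I by push_cast; ring,
    Complex.norm_exp_ofReal_mul_I]

lemma norm_aC_le {p : ℕ} [NeZero p] (c : ZMod p) {μ : ZMod p → ℝ} (h0 : ∀ z, 0 ≤ μ z)
    (h1 : ∑ z, μ z = 1) : ‖aC p c μ‖ ≤ 1 :=
  calc ‖aC p c μ‖ ≤ ∑ z, ‖(μ z : ℂ) * ep p (c * z)‖ := norm_sum_le _ _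
    _ = 1 := by simp [norm_ep, abs_of_nonneg (h0 _), h1]

lemma inn_ep_sub_inn_aC {p : ℕ} [NeZero p] {n : ℕ} (Γ : (Fin n → ZMod p) → ZMod p → ℝ)
    (F g : (Fin n → ZMod p) → ZMod p) :
    inn p n (fun x => ep p (F x)) (fun x => ep p (g x)) -
        inn p n (fun x => aC p 1 (Γ x)) (fun x => ep p (g x)) =
      (∑ x, (ep p (F x) - aC p 1 (Γ x)) * starRingEnd ℂ (ep p (g x))) / (p : ℂ) ^ n := by
  simp [inn, expC, ZMod.card, sub_mul, Finset.sum_sub_distrib, sub_div]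

lemma piProb_norm_inn_sub_ge_le {p : ℕ} [NeZero p] {n : ℕ} {Γ : (Fin n → ZMod p) → ZMod p → ℝ}
    (hΓ : IsDist p n Γ) (g : (Fin n → ZMod p) → ZMod p) {l : ℝ} (hl : 0 ≤ l) (hl2 : 2 * l ≤ 1)
    (t : ℝ) :
    piProb Γ {F : (Fin n → ZMod p) → ZMod p |
        t ≤ ‖inn p n (fun x => ep p (F x)) (fun x => ep p (g x)) -
          inn p n (fun x => aC p 1 (Γ x)) (fun x => ep p (g x))‖} ≤
      4 * Real.exp (-(l * (t * p ^ n / 2)) + l ^ 2 * 2 ^ 2 * p ^ n) := by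
  set w : (Fin n → ZMod p) → ZMod p → ℂ :=
    fun x c => (ep p c - aC p 1 (Γ x)) * starRingEnd ℂ (ep p (g x))
  have hN : (0 : ℝ) < p ^ n := pow_pos (Nat.cast_pos.2 (NeZero.pos p)) n
  have hw : ∀ x c, ‖w x c‖ ≤ 2 := fun x c => by
    rw [norm_mul, Complex.norm_conj, norm_ep, mul_one]
    linarith [norm_sub_le (ep p c) (aC p 1 (Γ x)), norm_ep c,
      norm_aC_le 1 (hΓ.1 x) (hΓ.2 x)]
  have hmean : ∀ x, ∑ c, (Γ x c : ℂ) * w x c = 0 := fun x => by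
    have h1 : ∑ c, (Γ x c : ℂ) = 1 := by exact_mod_cast hΓ.2 x
    simp only [w, mul_sub, sub_mul, ← mul_assoc, Finset.sum_sub_distrib, ← Finset.sum_mul, h1,
      one_mul]
    simp [aC]
  have hevent : ({F : (Fin n → ZMod p) → ZMod p |
        t ≤ ‖inn p n (fun x => ep p (F x)) (fun x => ep p (g x)) -
          inn p n (fun x => aC p 1 (Γ x)) (fun x => ep p (g x))‖} :
        Finset ((Fin n → ZMod p) → ZMod p)) =
      ({F | 2 * (t * p ^ n / 2) ≤ ‖∑ x, w x (F x)‖} :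
        Finset ((Fin n → ZMod p) → ZMod p)) := by
    refine Finset.filter_congr fun F _ => ?_
    rw [inn_ep_sub_inn_aC, norm_div, norm_pow, Complex.norm_natCast, le_div_iff₀ hN,
      show 2 * (t * (p : ℝ) ^ n / 2) = t * p ^ n by ring]
  rw [hevent]
  have hcard : (Fintype.card (Fin n → ZMod p) : ℝ) = p ^ n := by simp [ZMod.card]
  simpa only [hcard] using
    piProb_norm_sum_ge_le_four_exp hΓ.1 hΓ.2 hw hmean hl (by linarith) (t * p ^ n / 2)

lemma piProb_abs_uNormF_sub_ge_le {p : ℕ} [NeZero p] {n : ℕ}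
    (S : Set ((Fin n → ZMod p) → ZMod p)) {Γ : (Fin n → ZMod p) → ZMod p → ℝ}
    (hΓ : IsDist p n Γ) {ε l : ℝ} (hl : 0 < l) (hlε : 32 * l ≤ ε) (hl2 : 2 * l ≤ 1) :
    piProb Γ {F : (Fin n → ZMod p) → ZMod p |
        ε ≤ |uNormF p n S (fun x => ep p (F x)) - uNormF p n S (fun x => aC p 1 (Γ x))|} ≤
      Nat.card S * (4 * Real.exp (-(l * ε / 8 * p ^ n))) := by
  classical
  set dev : ((Fin n → ZMod p) → ZMod p) → ((Fin n → ZMod p) → ZMod p) → ℝ := fun g F =>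
    ‖inn p n (fun x => ep p (F x)) (fun x => ep p (g x)) -
      inn p n (fun x => aC p 1 (Γ x)) (fun x => ep p (g x))‖
  have hcover : ({F | ε ≤ |uNormF p n S (fun x => ep p (F x)) -
        uNormF p n S (fun x => aC p 1 (Γ x))|} : Finset ((Fin n → ZMod p) → ZMod p)) ⊆
      S.toFinset.biUnion fun g => {F | ε / 2 ≤ dev g F} := by
    intro F hF
    rw [Finset.mem_filter] at hF
    by_contra hnot
    simp only [Finset.mem_biUnion, Set.mem_toFinset, Finset.mem_filter, Finset.mem_univ,
      true_and, not_exists, not_and, not_le] at hnot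
    have hclose := abs_biSup_sub_biSup_le S (fun g => norm_nonneg _) (fun g => norm_nonneg _)
      (by linarith) fun g hg => (abs_norm_sub_norm_le _ _).trans (hnot g hg).le
    linarith [le_trans hF.2 hclose]
  have hN : (0 : ℝ) ≤ p ^ n := by positivity
  calc piProb Γ {F | ε ≤ |uNormF p n S (fun x => ep p (F x)) -
        uNormF p n S (fun x => aC p 1 (Γ x))|}
      ≤ ∑ g ∈ S.toFinset, piProb Γ {F | ε / 2 ≤ dev g F} :=
        (piProb_mono hΓ.1 hcover).trans (piProb_biUnion_le hΓ.1 _ _)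
    _ ≤ ∑ _g ∈ S.toFinset,
          4 * Real.exp (-(l * (ε / 2 * p ^ n / 2)) + l ^ 2 * 2 ^ 2 * p ^ n) :=
        Finset.sum_le_sum fun g _ => piProb_norm_inn_sub_ge_le hΓ g hl.le hl2 (ε / 2)
    _ ≤ Nat.card S * (4 * Real.exp (-(l * ε / 8 * p ^ n))) := by
        rw [Finset.sum_const, nsmul_eq_mul, Set.toFinset_card, ← Nat.card_eq_fintype_card]
        gcongr
        nlinarith [mul_nonneg (mul_nonneg hl.le (sub_nonneg.2 hlε)) hN]

lemma sum_probFun_mul_ite_eq_piProb {p : ℕ} [NeZero p] {n : ℕ}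
    (Γ : (Fin n → ZMod p) → ZMod p → ℝ) (E : ((Fin n → ZMod p) → ZMod p) → Prop) [DecidablePred E] :
    ∑ F, probFun p n Γ F * (if E F then 1 else 0) = piProb Γ {F | E F} := by
  simp [piProb, probFun, Finset.sum_filter]

/-- Claim: sampled functions have nearly the same correlation with `D` as
the distributional function. Let `D` be a proper dual family. For every `ε, η > 0` there is
`n₀` such that for all `n ≥ n₀` and every distributional function `Γ : F_p^n → P(F_p)`, the
probability (over `F ∼ Γ`) that `|‖e_p(F)‖_{u(D_n)} − ‖e_p(Γ)‖_{u(D_n)}| ≥ ε` is at most `η`. -/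
theorem statement6 (p : ℕ) [NeZero p] (hp : p.Prime)
    (D : ∀ n : ℕ, Set ((Fin n → ZMod p) → ZMod p))
    (hD : ProperDual p D) :
    ∀ ε : ℝ, 0 < ε → ∀ η : ℝ, 0 < η → ∃ n₀ : ℕ, ∀ n, n₀ ≤ n →
      ∀ Γ : (Fin n → ZMod p) → ZMod p → ℝ, IsDist p n Γ →
        (∑ F : (Fin n → ZMod p) → ZMod p, probFun p n Γ F *
          (if ε ≤ |uNormF p n (D n) (fun x => ep p (F x)) -
                    uNormF p n (D n) (fun x => aC p 1 (Γ x))| then 1 else 0)) ≤ η := by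
  intro ε hε η hη
  set l := min (ε / 32) (1 / 2)
  have hl : 0 < l := lt_min (by linarith) (by norm_num)
  set c := l * ε / 8
  have hc : 0 < c := by positivity
  have hp1 : (1 : ℝ) < p := by exact_mod_cast hp.one_lt
  have hlogp : 0 < Real.log p := Real.log_pos hp1
  obtain ⟨-, -, hsparse⟩ := hD
  obtain ⟨n₁, hsparse⟩ := hsparse (c / (2 * Real.log p)) (by positivity)
  have htail : Tendsto (fun n : ℕ => 4 * Real.exp (-(c / 2 * (p : ℝ) ^ n))) atTop (𝓝 0) := by
    simpa using (Real.tendsto_exp_neg_atTop_nhds_zero.comp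
      ((tendsto_pow_atTop_atTop_of_one_lt hp1).const_mul_atTop (half_pos hc))).const_mul 4
  obtain ⟨n₂, hn₂⟩ := eventually_atTop.1 (htail.eventually_le_const hη)
  refine ⟨max n₁ n₂, fun n hn Γ hΓ => ?_⟩
  have hcard : (Nat.card (D n) : ℝ) ≤ Real.exp (c / 2 * p ^ n) := by
    convert hsparse n (le_of_max_le_left hn) using 1
    rw [Real.rpow_def_of_pos (by positivity)]
    field_simp
  rw [sum_probFun_mul_ite_eq_piProb]
  calc _ ≤ Nat.card (D n) * (4 * Real.exp (-(c * p ^ n))) :=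
        piProb_abs_uNormF_sub_ge_le (D n) hΓ hl (by linarith [min_le_left (ε / 32) (1 / 2)])
          (by linarith [min_le_right (ε / 32) (1 / 2)])
    _ ≤ Real.exp (c / 2 * p ^ n) * (4 * Real.exp (-(c * p ^ n))) := by gcongr
    _ = 4 * Real.exp (-(c / 2 * p ^ n)) := by
        rw [mul_left_comm, ← Real.exp_add]
        ring_nf
    _ ≤ η := hn₂ n (le_of_max_le_right hn)

end Paper
end
end

section
/- Let p be a prime, and let 𝓛_0^{M_0} and 𝓛_1^{M_1} be 1-flagged systems of linear forms over F_p such that both 𝓛_0 ∪ {M_0} and 𝓛_1 ∪ {M_1} are connected. Let 𝓛^M := 𝓛_0^{M_0} · 𝓛_1^{M_1} be their product. Then 𝓛 ∪ {M} is connected. -/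
open Filter Topology

noncomputable section

namespace Paper

variable (p : ℕ) [NeZero p]

/-!
The kernel of `T` is the line through `M₀ ⊕ (-M₁)`, which meets neither coordinate block, so `T`
embeds both `F_p^{k₀}` and `F_p^{k₁}` injectively. Hence `𝓛 ∪ {M}` is the union of injective
linear images of `𝓛₀ ∪ {M₀}` and `𝓛₁ ∪ {M₁}`, both connected and both containing `M`; and a
union of two connected systems sharing a form is connected.
-/

def appendLinearEquiv (R M : Type*) [Semiring R] [AddCommMonoid M] [Module R M] (m n : ℕ) :
    ((Fin m → M) × (Fin n → M)) ≃ₗ[R] (Fin (m + n) → M) where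
  __ := Fin.appendEquiv m n
  map_add' x y := by
    funext i
    refine Fin.addCases (fun i => ?_) (fun i => ?_) i <;> simp
  map_smul' c x := by
    funext i
    refine Fin.addCases (fun i => ?_) (fun i => ?_) i <;> simp

lemma LinearMap.ker_eq_span_singleton_of_surjective {K V W : Type*} [Field K]
    [AddCommGroup V] [Module K V] [FiniteDimensional K V] [AddCommGroup W] [Module K W]
    {T : V →ₗ[K] W} (hT : Function.Surjective T)
    (hdim : Module.finrank K V = Module.finrank K W + 1) {w : V} (hw : w ≠ 0) (hTw : T w = 0) :
    LinearMap.ker T = K ∙ w := by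
  have hker : Module.finrank K (LinearMap.ker T) = 1 := by
    have := LinearMap.finrank_range_add_finrank_ker T
    rw [LinearMap.range_eq_top.2 hT, finrank_top] at this
    omega
  refine (Submodule.eq_of_le_of_finrank_eq ?_ ?_).symm
  · exact (Submodule.span_singleton_le_iff_mem _ _).2 hTw
  · rw [finrank_span_singleton hw, hker]

/-- `T ∘ ι` is injective as soon as the line `ker T` avoids `range ι`, which `π` witnesses. -/
lemma LinearMap.injective_comp_of_ker_eq_span_singleton {K U V W X : Type*} [Field K]
    [AddCommGroup U] [Module K U] [AddCommGroup V] [Module K V] [AddCommGroup W] [Module K W]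
    [AddCommGroup X] [Module K X] {T : V →ₗ[K] W} {ι : U →ₗ[K] V} (hι : Function.Injective ι)
    {w : V} (hker : LinearMap.ker T = K ∙ w) (π : V →ₗ[K] X) (hπι : ∀ u, π (ι u) = 0)
    (hπw : π w ≠ 0) : Function.Injective (T ∘ₗ ι) := by
  rw [← LinearMap.ker_eq_bot, Submodule.eq_bot_iff]
  intro u hu
  obtain ⟨c, hc⟩ := Submodule.mem_span_singleton.1 (hker ▸ hu : ι u ∈ K ∙ w)
  have hc0 : c = 0 := by
    have : c • π w = 0 := by rw [← map_smul, hc, hπι]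
    exact (smul_eq_zero.1 this).resolve_right hπw
  exact hι (by rw [← hc, hc0, zero_smul, map_zero])

lemma ConnectedFinset.span_filter_inf_span_filter_not_ne_bot {p k : ℕ}
    {C : Finset (Fin k → ZMod p)} (hC : ConnectedFinset p C)
    (P : (Fin k → ZMod p) → Prop) [DecidablePred P]
    {x y : Fin k → ZMod p} (hx : x ∈ C) (hPx : P x) (hy : y ∈ C) (hPy : ¬ P y) :
    Submodule.span (ZMod p) (C.filter P : Set (Fin k → ZMod p)) ⊓
      Submodule.span (ZMod p) (C.filter (fun v => ¬ P v) : Set (Fin k → ZMod p)) ≠ ⊥ := by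
  rw [Finset.filter_not]
  exact hC _ (Finset.filter_subset _ _) ⟨x, Finset.mem_filter.2 ⟨hx, hPx⟩⟩
    fun h => hPy (Finset.mem_filter.1 (h ▸ hy)).2

lemma ConnectedFinset.image {p k k' : ℕ} {C : Finset (Fin k → ZMod p)}
    (hC : ConnectedFinset p C)
    {φ : (Fin k → ZMod p) →ₗ[ZMod p] (Fin k' → ZMod p)} (hφ : Function.Injective φ) :
    ConnectedFinset p (C.image φ) := by
  intro S hS ⟨s, hs⟩ hSne
  obtain ⟨x, hx, rfl⟩ := Finset.mem_image.1 (hS hs)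
  obtain ⟨z, hz, hyS⟩ := Finset.not_subset.1 fun h => hSne (hS.antisymm h)
  obtain ⟨y, hy, rfl⟩ := Finset.mem_image.1 hz
  have hne := hC.span_filter_inf_span_filter_not_ne_bot (φ · ∈ S) hx hs hy hyS
  have hS' : (C.filter (φ · ∈ S)).image φ = S :=
    (Finset.filter_image (p := (· ∈ S))).symm.trans
      (by rw [Finset.filter_mem_eq_inter, Finset.inter_eq_right.2 hS])
  have hSc : (C.filter (φ · ∉ S)).image φ = C.image φ \ S :=
    (Finset.filter_image (p := (· ∉ S))).symm.trans Finset.filter_notMem_eq_sdiff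
  have key := (Submodule.map_injective_of_injective hφ).ne hne
  rwa [Submodule.map_bot, Submodule.map_inf _ hφ, ← Submodule.span_image, ← Submodule.span_image,
    ← Finset.coe_image, ← Finset.coe_image, hS', hSc] at key

/-- A partition of `A ∪ B` splitting neither `A` nor `B` puts the common point `x`, and hence
everything, on one side. -/
lemma ConnectedFinset.union {p k : ℕ} {A B : Finset (Fin k → ZMod p)}
    (hA : ConnectedFinset p A) (hB : ConnectedFinset p B) {x : Fin k → ZMod p}
    (hxA : x ∈ A) (hxB : x ∈ B) :
    ConnectedFinset p (A ∪ B) := by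
  intro S hS ⟨s, hs⟩ hSne hbot
  have unsplit : ∀ C, ConnectedFinset p C → C ⊆ A ∪ B → ∀ a ∈ C, ∀ b ∈ C, a ∈ S → b ∈ S := by
    intro C hC hCAB a ha b hb haS
    by_contra hbS
    refine hC.span_filter_inf_span_filter_not_ne_bot (· ∈ S) ha haS hb hbS (eq_bot_mono ?_ hbot)
    refine inf_le_inf (Submodule.span_mono ?_) (Submodule.span_mono ?_) <;>
      intro v hv <;> simp only [Finset.coe_filter, Finset.coe_sdiff, Set.mem_ofPred_eq] at hv ⊢
    · exact hv.2
    · exact ⟨hCAB hv.1, hv.2⟩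
  have same_side : ∀ z ∈ A ∪ B, z ∈ S ↔ x ∈ S := by
    intro z hz
    rcases Finset.mem_union.1 hz with hz | hz
    · exact ⟨unsplit A hA Finset.subset_union_left z hz x hxA,
        unsplit A hA Finset.subset_union_left x hxA z hz⟩
    · exact ⟨unsplit B hB Finset.subset_union_right z hz x hxB,
        unsplit B hB Finset.subset_union_right x hxB z hz⟩
  obtain ⟨y, hyAB, hyS⟩ := Finset.not_subset.1 fun h => hSne (hS.antisymm h)
  exact hyS ((same_side y hyAB).2 ((same_side s (hS hs)).1 hs))

lemma insert_productSystem {p k₀ k₁ : ℕ}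
    (𝓛₀ : Finset (Fin k₀ → ZMod p)) (𝓛₁ : Finset (Fin k₁ → ZMod p))
    {M₀ : Fin k₀ → ZMod p} {M₁ : Fin k₁ → ZMod p} {M : Fin (k₀ + k₁ - 1) → ZMod p}
    {T : (Fin (k₀ + k₁) → ZMod p) →ₗ[ZMod p] (Fin (k₀ + k₁ - 1) → ZMod p)}
    (hT₀ : T (Fin.append M₀ 0) = M) (hT₁ : T (Fin.append 0 M₁) = M) :
    insert M (productSystem p 𝓛₀ 𝓛₁ T) =
      (insert M₀ 𝓛₀).image (fun v => T (Fin.append v 0)) ∪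
        (insert M₁ 𝓛₁).image (fun v => T (Fin.append 0 v)) := by
  rw [productSystem, Finset.image_union, Finset.image_image, Finset.image_image,
    Finset.image_insert, Finset.image_insert, Function.comp_def, Function.comp_def, hT₀, hT₁,
    Finset.insert_union_distrib]

theorem statement15_general (p : ℕ) [NeZero p] (hp : p.Prime) (k₀ k₁ : ℕ)
    (𝓛₀ : Finset (Fin k₀ → ZMod p)) (M₀ : Fin k₀ → ZMod p)
    (𝓛₁ : Finset (Fin k₁ → ZMod p)) (M₁ : Fin k₁ → ZMod p)
    (hM₀ : M₀ ≠ 0)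
    (hM₁ : M₁ ≠ 0)
    (hc₀ : ConnectedFinset p (insert M₀ 𝓛₀))
    (hc₁ : ConnectedFinset p (insert M₁ 𝓛₁))
    (M : Fin (k₀ + k₁ - 1) → ZMod p)
    (T : (Fin (k₀ + k₁) → ZMod p) →ₗ[ZMod p] (Fin (k₀ + k₁ - 1) → ZMod p))
    (hTsurj : Function.Surjective T)
    (hT₀ : T (Fin.append M₀ (0 : Fin k₁ → ZMod p)) = M)
    (hT₁ : T (Fin.append (0 : Fin k₀ → ZMod p) M₁) = M) :
    ConnectedFinset p (insert M (productSystem p 𝓛₀ 𝓛₁ T)) := by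
  have : Fact p.Prime := ⟨hp⟩
  set T' := T ∘ₗ (appendLinearEquiv (ZMod p) (ZMod p) k₀ k₁).toLinearMap
  have hk₀ : k₀ ≠ 0 := by
    rintro rfl
    exact hM₀ (Subsingleton.elim _ _)
  have hker : LinearMap.ker T' = ZMod p ∙ (M₀, -M₁) := by
    refine LinearMap.ker_eq_span_singleton_of_surjective (T := T') (w := (M₀, -M₁))
      (hTsurj.comp (appendLinearEquiv _ _ k₀ k₁).surjective)
      (by simp only [Module.finrank_prod, Module.finrank_fin_fun]; omega)
      (fun h => hM₀ (congrArg Prod.fst h)) ?_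
    have : (M₀, -M₁) = LinearMap.inl (ZMod p) _ _ M₀ - LinearMap.inr (ZMod p) _ _ M₁ := by simp
    rw [this, map_sub]
    exact sub_eq_zero.2 (hT₀.trans hT₁.symm)
  have hφ₀ : Function.Injective (T' ∘ₗ LinearMap.inl _ _ _) :=
    LinearMap.injective_comp_of_ker_eq_span_singleton LinearMap.inl_injective hker
      (LinearMap.snd _ _ _) (fun _ => rfl) (neg_ne_zero.2 hM₁)
  have hφ₁ : Function.Injective (T' ∘ₗ LinearMap.inr _ _ _) :=
    LinearMap.injective_comp_of_ker_eq_span_singleton LinearMap.inr_injective hker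
      (LinearMap.fst _ _ _) (fun _ => rfl) hM₀
  rw [insert_productSystem 𝓛₀ 𝓛₁ hT₀ hT₁]
  refine (hc₀.image hφ₀).union (hc₁.image hφ₁) (x := M) ?_ ?_
  · exact Finset.mem_image.2 ⟨M₀, Finset.mem_insert_self _ _, hT₀⟩
  · exact Finset.mem_image.2 ⟨M₁, Finset.mem_insert_self _ _, hT₁⟩

/-- Lemma 6.6: the product of connected 1-flagged systems is connected.
Let `𝓛₀^{M₀}` and `𝓛₁^{M₁}` be 1-flagged systems of linear forms such that both
`𝓛₀ ∪ {M₀}` and `𝓛₁ ∪ {M₁}` are connected. Then for any choice of a nonzero flag `M` and a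
surjective linear map `T` realizing the product `𝓛^M = 𝓛₀^{M₀} · 𝓛₁^{M₁}`, the system
`𝓛 ∪ {M}` is connected. -/
theorem statement15 (p : ℕ) [NeZero p] (hp : p.Prime) (k₀ k₁ : ℕ)
    (𝓛₀ : Finset (Fin k₀ → ZMod p)) (M₀ : Fin k₀ → ZMod p)
    (𝓛₁ : Finset (Fin k₁ → ZMod p)) (M₁ : Fin k₁ → ZMod p)
    (hM₀ : M₀ ≠ 0) (hM₀span : M₀ ∈ Submodule.span (ZMod p) (𝓛₀ : Set (Fin k₀ → ZMod p)))
    (hM₁ : M₁ ≠ 0) (hM₁span : M₁ ∈ Submodule.span (ZMod p) (𝓛₁ : Set (Fin k₁ → ZMod p)))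
    (hc₀ : ConnectedFinset p (insert M₀ 𝓛₀))
    (hc₁ : ConnectedFinset p (insert M₁ 𝓛₁))
    (M : Fin (k₀ + k₁ - 1) → ZMod p) (hM : M ≠ 0)
    (T : (Fin (k₀ + k₁) → ZMod p) →ₗ[ZMod p] (Fin (k₀ + k₁ - 1) → ZMod p))
    (hTsurj : Function.Surjective T)
    (hT₀ : T (Fin.append M₀ (0 : Fin k₁ → ZMod p)) = M)
    (hT₁ : T (Fin.append (0 : Fin k₀ → ZMod p) M₁) = M) :
    ConnectedFinset p (insert M (productSystem p 𝓛₀ 𝓛₁ T)) :=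
  statement15_general p hp k₀ k₁ 𝓛₀ M₀ 𝓛₁ M₁ hM₀ hM₁ hc₀ hc₁ M T hTsurj hT₀ hT₁

end Paper
end
end

section
/- Let p be a prime and let 𝓛_1, …, 𝓛_k be pairwise non-isomorphic connected systems of linear forms over F_p. Let P_1, …, P_k be polynomials of degree at most d in the variables {f(x) : x ∈ F_p^n} (i.e., elements of the polynomial ring over ℂ in these p^n variables). If n > d + max_{i∈[k]} dim(span(𝓛_i)) and dim(span(𝓛_i)) > d for every i ∈ [k], then the polynomial identity P_1(f)·t_{𝓛_1}(f) + … + P_k(f)·t_{𝓛_k}(f) ≡ 0 (as a formal polynomial in the variables {f(x)}) implies P_i ≡ 0 for every i ∈ [k]. -/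
open Filter Topology

noncomputable section

/-!
Among the pairs `(i, ω)` with `ω` a monomial of `P i`, pick one maximising the potential
`dim span (supp ω) + dim span 𝓛ᵢ`; call it `(j, ω)`. Since `dim span (supp ω) ≤ deg ω ≤ d`, the
bound on `n` yields a linear map `A` that is injective on `span 𝓛ⱼ` and maps it onto a subspace
meeting `span (supp ω)` only in `0`. Compare coefficients of `M = ω · ∏_{L ∈ 𝓛ⱼ} f(A L)` in `Σᵢ Pᵢ t_{𝓛ᵢ}`.
A term `coeff_{ω'}(Pᵢ) · ∏_{L ∈ 𝓛ᵢ} f(L(X))` contributing to `M` has potential at most that of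
`(j, ω)`, and a rank count then makes `X` injective on `span 𝓛ᵢ` with `{L(X)}` independent of
`supp ω'`. Connectivity of `𝓛ᵢ` puts all points `L(X)` on the `A 𝓛ⱼ` side of `supp M`, and
connectivity of `𝓛ⱼ` makes them cover it, so `X` maps `𝓛ᵢ` bijectively onto `A 𝓛ⱼ`: the two
systems are isomorphic, so `i = j`, and `ω' = ω`. Hence the coefficient of `M` is
`coeff_ω(Pⱼ)` times a positive constant, which must vanish.
-/

open Module Submodule MvPolynomial Finset

namespace Submodule

variable {K V W : Type*} [Field K] [AddCommGroup V] [Module K V] [AddCommGroup W] [Module K W]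

theorem finrank_map_eq_iff_disjoint_ker [FiniteDimensional K V] (f : V →ₗ[K] W)
    (U : Submodule K V) : finrank K (U.map f) = finrank K U ↔ Disjoint U (LinearMap.ker f) := by
  have h := (f.domRestrict U).finrank_range_add_finrank_ker
  rw [LinearMap.range_domRestrict, LinearMap.ker_domRestrict] at h
  rw [disjoint_iff_comap_eq_bot, ← Submodule.finrank_eq_zero]
  omega

theorem exists_linearMap_disjoint_comap [FiniteDimensional K V] [FiniteDimensional K W]
    (U : Submodule K V) (Y : Submodule K W) (h : finrank K U + finrank K Y ≤ finrank K W) :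
    ∃ A : V →ₗ[K] W, Disjoint U (Y.comap A) := by
  obtain ⟨C, hC⟩ := Y.exists_isCompl
  obtain ⟨f, hf⟩ := finrank_le_iff_exists_linearMap.mp
    (show finrank K U ≤ finrank K C by have := finrank_add_eq_of_isCompl hC; omega)
  obtain ⟨A, hA⟩ := LinearMap.exists_extend (C.subtype ∘ₗ f)
  refine ⟨A, disjoint_def.mpr fun v hv hAv => ?_⟩
  have hAv' : A v = f ⟨v, hv⟩ := LinearMap.congr_fun hA ⟨v, hv⟩
  have hf0 : f ⟨v, hv⟩ = 0 :=
    Subtype.ext (disjoint_def.mp hC.disjoint _ (hAv' ▸ hAv) (f ⟨v, hv⟩).2)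
  exact congrArg Subtype.val (hf (hf0.trans (map_zero f).symm))

theorem finrank_add_finrank_add_finrank_inf_le [FiniteDimensional K V]
    {U₁ U₂ S T : Submodule K V} (hU : Disjoint U₁ U₂) (hle : U₁ ⊔ U₂ ≤ S ⊔ T) :
    finrank K U₁ + finrank K U₂ + finrank K ↥(S ⊓ T) ≤ finrank K S + finrank K T := by
  have hU' := finrank_sup_add_finrank_inf_eq U₁ U₂
  rw [hU.eq_bot, finrank_bot] at hU'
  have := finrank_sup_add_finrank_inf_eq S T
  have := Submodule.finrank_mono hle
  omega

theorem disjoint_span_image_of_finrank_add_le [FiniteDimensional K V] [FiniteDimensional K W]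
    {A : V →ₗ[K] W} {X : Set V} {s t B : Set W} (hsB : Disjoint (span K s) (span K B))
    (hcover : s ∪ B ⊆ A '' X ∪ t)
    (h : Set.finrank K t + Set.finrank K X ≤ Set.finrank K s + Set.finrank K B) :
    Disjoint (span K (A '' X)) (span K t) ∧ Disjoint (span K X) (LinearMap.ker A) := by
  have hinf := finrank_add_finrank_add_finrank_inf_le hsB
    (S := span K (A '' X)) (T := span K t) (by rw [← span_union, ← span_union]; exact span_mono hcover)
  have hle := finrank_map_le A (span K X)
  rw [map_span] at hle
  unfold Set.finrank at h
  refine ⟨?_, (finrank_map_eq_iff_disjoint_ker _ _).mp ?_⟩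
  · rw [disjoint_iff, ← Submodule.finrank_eq_zero]
    omega
  · rw [map_span]
    omega

theorem disjoint_map_of_disjoint_comap {f : V →ₗ[K] W} {U : Submodule K V} {Y : Submodule K W}
    (h : Disjoint U (Y.comap f)) : Disjoint (U.map f) Y := by
  rw [disjoint_def] at h ⊢
  rintro _ ⟨v, hv, rfl⟩ hfv
  rw [h v hv hfv, map_zero]

end Submodule

theorem Set.finrank_image_eq_iff_disjoint_ker {K V W : Type*} [Field K] [AddCommGroup V]
    [Module K V] [AddCommGroup W] [Module K W] [FiniteDimensional K V] (A : V →ₗ[K] W)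
    (X : Set V) :
    Set.finrank K (A '' X) = Set.finrank K X ↔ Disjoint (span K X) (LinearMap.ker A) := by
  rw [Set.finrank, Set.finrank, ← map_span]
  exact finrank_map_eq_iff_disjoint_ker A _

section MonomialExponent

variable {ι σ : Type*} [Fintype ι]

def monomialExponent (a : ι → σ) : σ →₀ ℕ := ∑ i, Finsupp.single (a i) 1

variable (a : ι → σ)

theorem monomialExponent_apply [DecidableEq σ] (x : σ) :
    monomialExponent a x = #{i | a i = x} := by
  simp [monomialExponent, Finsupp.finsetSum_apply, Finsupp.single_apply]

theorem support_monomialExponent [DecidableEq σ] :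
    (monomialExponent a).support = Finset.univ.image a := by
  ext x
  simp [monomialExponent_apply]

theorem prod_X_eq_monomial_monomialExponent {R : Type*} [CommSemiring R] :
    ∏ i, (X (a i) : MvPolynomial σ R) = monomial (monomialExponent a) 1 := by
  rw [monomialExponent, monomial_sum_one]
  rfl

theorem monomialExponent_apply_of_injective [DecidableEq σ] {a : ι → σ}
    (ha : Function.Injective a) (x : σ) :
    monomialExponent a x = if x ∈ Set.range a then 1 else 0 := by
  rw [monomialExponent_apply]
  split_ifs with hx
  · obtain ⟨i, rfl⟩ := hx
    rw [Finset.card_eq_one]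
    exact ⟨i, by ext; simp [ha.eq_iff]⟩
  · simpa using hx

theorem monomialExponent_eq_of_range_eq {κ : Type*} [Fintype κ] {a : ι → σ} {b : κ → σ}
    (ha : Function.Injective a) (hb : Function.Injective b) (h : Set.range a = Set.range b) :
    monomialExponent a = monomialExponent b := by
  classical
  ext x
  simp only [monomialExponent_apply_of_injective ha, monomialExponent_apply_of_injective hb, h]

theorem injective_of_monomialExponent_le_one {a : ι → σ} (h : ∀ x, monomialExponent a x ≤ 1) :
    Function.Injective a := by
  classical
  intro i j hij
  have := h (a i)
  rw [monomialExponent_apply, Finset.card_le_one] at this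
  exact this i (by simp) j (by simp [hij])

theorem coe_support_add_monomialExponent [DecidableEq σ] (ω : σ →₀ ℕ) :
    ((ω + monomialExponent a).support : Set σ) = (ω.support : Set σ) ∪ Set.range a := by
  simp [Finsupp.support_add_eq_union, support_monomialExponent]

end MonomialExponent

theorem MvPolynomial.finrank_span_support_le_totalDegree {R K V : Type*} [CommSemiring R]
    [Semiring K] [StrongRankCondition K] [AddCommMonoid V] [Module K V]
    {P : MvPolynomial V R} {s : V →₀ ℕ} (hs : s ∈ P.support) :
    Set.finrank K (s.support : Set V) ≤ P.totalDegree := by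
  refine (finrank_span_finset_le_card _).trans (le_trans ?_ (le_totalDegree hs))
  rw [Finset.card_eq_sum_ones, Finsupp.sum]
  exact Finset.sum_le_sum fun x hx => Nat.one_le_iff_ne_zero.mpr (Finsupp.mem_support_iff.mp hx)

theorem Fintype.linearCombination_pi_single_eq {K V : Type*} [Semiring K] [AddCommMonoid V]
    [Module K V] {k : ℕ} (A : (Fin k → K) →ₗ[K] V) :
    Fintype.linearCombination K (fun s => A (Pi.single s 1)) = A := by
  ext s
  simp [Fintype.linearCombination_apply_single]

namespace Paper

variable {p : ℕ}

theorem ConnectedSystem.ne_zero {k m : ℕ} {L : Fin m → Fin k → ZMod p}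
    (hL : ConnectedSystem p k m L) (hr : span (ZMod p) (Set.range L) ≠ ⊥) (l : Fin m) :
    L l ≠ 0 := by
  intro h0
  by_cases hl : ({l} : Finset (Fin m)) = Finset.univ
  · refine hr ((span_eq_bot).mpr ?_)
    rintro _ ⟨l', rfl⟩
    rwa [Finset.mem_singleton.mp (hl ▸ Finset.mem_univ l' : l' ∈ ({l} : Finset (Fin m)))]
  · exact hL {l} (Finset.singleton_nonempty l) hl (by simp [h0])

section LinearImage

variable {V : Type*} [AddCommGroup V] [Module (ZMod p) V]

theorem ConnectedSystem.forall_mem_or_forall_mem {k m : ℕ} {L : Fin m → Fin k → ZMod p}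
    (hL : ConnectedSystem p k m L) {A : (Fin k → ZMod p) →ₗ[ZMod p] V}
    (hA : Disjoint (span (ZMod p) (Set.range L)) (LinearMap.ker A)) {s t : Set V}
    (hst : Disjoint (span (ZMod p) s) (span (ZMod p) t)) (h : ∀ l, A (L l) ∈ s ∪ t) :
    (∀ l, A (L l) ∈ s) ∨ (∀ l, A (L l) ∈ t) := by
  classical
  by_contra! hne
  obtain ⟨⟨l₁, hl₁⟩, ⟨l₂, hl₂⟩⟩ := hne
  set S : Finset (Fin m) := {l | A (L l) ∈ s}
  have hS : S.Nonempty := ⟨l₂, by simpa [S] using (h l₂).resolve_right hl₂⟩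
  have hSu : S ≠ Finset.univ := fun hS =>
    hl₁ (by simpa [S] using (hS ▸ Finset.mem_univ l₁ : l₁ ∈ S))
  have hmap : ∀ (T : Finset (Fin m)) (u : Set V), (∀ l ∈ T, A (L l) ∈ u) →
      ∀ v ∈ span (ZMod p) (L '' T), A v ∈ span (ZMod p) u := by
    intro T u hT v hv
    have := mem_map_of_mem (f := A) hv
    rw [map_span, Set.image_image] at this
    exact span_mono (by rintro _ ⟨l, hl, rfl⟩; exact hT l hl) this
  obtain ⟨v, hv, hv0⟩ := (Submodule.ne_bot_iff _).mp (hL S hS hSu)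
  obtain ⟨hv₁, hv₂⟩ := mem_inf.mp hv
  refine hv0 (LinearMap.disjoint_ker.mp hA v (span_mono (Set.image_subset_range _ _) hv₁) ?_)
  refine disjoint_def.mp hst _ (hmap S s (fun l hl => by simpa [S] using hl) v hv₁)
    (hmap Sᶜ t (fun l hl => (h l).resolve_left (by simpa [S] using hl)) v hv₂)

theorem systemsIso_of_apply_eq {k₁ m₁ k₂ m₂ : ℕ} {L₁ : Fin m₁ → Fin k₁ → ZMod p}
    {L₂ : Fin m₂ → Fin k₂ → ZMod p} {A₁ : (Fin k₁ → ZMod p) →ₗ[ZMod p] V}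
    {A₂ : (Fin k₂ → ZMod p) →ₗ[ZMod p] V}
    (h₁ : Disjoint (span (ZMod p) (Set.range L₁)) (LinearMap.ker A₁))
    (h₂ : Disjoint (span (ZMod p) (Set.range L₂)) (LinearMap.ker A₂))
    (σ : Fin m₁ ≃ Fin m₂) (hσ : ∀ l, A₁ (L₁ l) = A₂ (L₂ (σ l))) : SystemsIso p L₁ L₂ := by
  refine ⟨σ, fun c => ?_⟩
  have key : A₁ (∑ l, c l • L₁ l) = A₂ (∑ l, c l • L₂ (σ l)) := by simp [hσ]
  have mem₁ : ∑ l, c l • L₁ l ∈ span (ZMod p) (Set.range L₁) :=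
    sum_mem fun l _ => smul_mem _ _ (subset_span ⟨l, rfl⟩)
  have mem₂ : ∑ l, c l • L₂ (σ l) ∈ span (ZMod p) (Set.range L₂) :=
    sum_mem fun l _ => smul_mem _ _ (subset_span ⟨σ l, rfl⟩)
  constructor
  · intro h
    exact LinearMap.disjoint_ker.mp h₂ _ mem₂ (by rw [← key, h, map_zero])
  · intro h
    exact LinearMap.disjoint_ker.mp h₁ _ mem₁ (by rw [key, h, map_zero])

end LinearImage

section Exponents

variable [Fact p.Prime] {V : Type*} [AddCommGroup V] [Module (ZMod p) V]
  [FiniteDimensional (ZMod p) V] [DecidableEq V]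
  {k₁ m₁ k₂ m₂ : ℕ} {L₁ : Fin m₁ → Fin k₁ → ZMod p} {L₂ : Fin m₂ → Fin k₂ → ZMod p}
  {A₁ : (Fin k₁ → ZMod p) →ₗ[ZMod p] V} {A₂ : (Fin k₂ → ZMod p) →ₗ[ZMod p] V} {ω ω' : V →₀ ℕ}

theorem range_eq_and_disjoint_ker_of_add_eq
    (hL₁ : ConnectedSystem p k₁ m₁ L₁) (hL₂ : ConnectedSystem p k₂ m₂ L₂)
    (hA₂ : Disjoint (span (ZMod p) (Set.range L₂))
      ((span (ZMod p) (ω.support : Set V)).comap A₂))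
    (hω : Set.finrank (ZMod p) (ω.support : Set V) < Set.finrank (ZMod p) (Set.range L₁))
    (hpot : Set.finrank (ZMod p) (ω'.support : Set V) + Set.finrank (ZMod p) (Set.range L₁) ≤
      Set.finrank (ZMod p) (ω.support : Set V) + Set.finrank (ZMod p) (Set.range L₂))
    (hadd : ω' + monomialExponent (A₁ ∘ L₁) = ω + monomialExponent (A₂ ∘ L₂)) :
    Set.range (A₁ ∘ L₁) = Set.range (A₂ ∘ L₂) ∧
      Disjoint (span (ZMod p) (Set.range L₁)) (LinearMap.ker A₁) := by
  have hsupp : (ω'.support : Set V) ∪ Set.range (A₁ ∘ L₁) =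
      (ω.support : Set V) ∪ Set.range (A₂ ∘ L₂) := by
    rw [← coe_support_add_monomialExponent (A₁ ∘ L₁), hadd, coe_support_add_monomialExponent]
  have hker₂ : Disjoint (span (ZMod p) (Set.range L₂)) (LinearMap.ker A₂) :=
    hA₂.mono_right fun v hv => by simp [LinearMap.mem_ker.mp hv]
  have hdisj₂ : Disjoint (span (ZMod p) (ω.support : Set V))
      (span (ZMod p) (Set.range (A₂ ∘ L₂))) := by
    rw [Set.range_comp, ← map_span]
    exact (disjoint_map_of_disjoint_comap hA₂).symm
  have hrk₂ := (Set.finrank_image_eq_iff_disjoint_ker A₂ _).mpr hker₂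
  rw [← Set.range_comp] at hrk₂
  obtain ⟨hST, hker₁⟩ := disjoint_span_image_of_finrank_add_le (X := Set.range L₁) hdisj₂
    (by rw [← Set.range_comp, ← hsupp, Set.union_comm]) (by omega)
  have hrk₁ := (Set.finrank_image_eq_iff_disjoint_ker A₁ _).mpr hker₁
  rw [← Set.range_comp] at hST hrk₁
  have hab : Set.range (A₁ ∘ L₁) ⊆ Set.range (A₂ ∘ L₂) := by
    rcases hL₁.forall_mem_or_forall_mem hker₁ hdisj₂ (fun l => hsupp ▸ Or.inr ⟨l, rfl⟩)
      with h | h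
    · have : Set.finrank (ZMod p) (Set.range (A₁ ∘ L₁)) ≤
          Set.finrank (ZMod p) (ω.support : Set V) :=
        Set.finrank_mono (Set.range_subset_iff.mpr h)
      omega
    · exact Set.range_subset_iff.mpr h
  refine ⟨hab.antisymm ?_, hker₁⟩
  rcases hL₂.forall_mem_or_forall_mem hker₂ hST
    (fun l => (show A₂ (L₂ l) ∈ (ω'.support : Set V) ∪ Set.range (A₁ ∘ L₁) from
      hsupp ▸ Or.inr ⟨l, rfl⟩).symm) with h | h
  · exact Set.range_subset_iff.mpr h
  · have h0 : span (ZMod p) (Set.range (A₁ ∘ L₁)) = ⊥ :=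
      hST.eq_bot_of_le (span_mono (hab.trans (Set.range_subset_iff.mpr h)))
    rw [Set.finrank, h0, finrank_bot] at hrk₁
    omega

theorem systemsIso_and_monomialExponent_eq_of_add_eq
    (hL₁ : ConnectedSystem p k₁ m₁ L₁) (hL₂ : ConnectedSystem p k₂ m₂ L₂)
    (hinj₂ : Function.Injective L₂) (hne₂ : ∀ l, L₂ l ≠ 0)
    (hA₂ : Disjoint (span (ZMod p) (Set.range L₂))
      ((span (ZMod p) (ω.support : Set V)).comap A₂))
    (hω : Set.finrank (ZMod p) (ω.support : Set V) < Set.finrank (ZMod p) (Set.range L₁))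
    (hpot : Set.finrank (ZMod p) (ω'.support : Set V) + Set.finrank (ZMod p) (Set.range L₁) ≤
      Set.finrank (ZMod p) (ω.support : Set V) + Set.finrank (ZMod p) (Set.range L₂))
    (hadd : ω' + monomialExponent (A₁ ∘ L₁) = ω + monomialExponent (A₂ ∘ L₂)) :
    SystemsIso p L₁ L₂ ∧ monomialExponent (A₁ ∘ L₁) = monomialExponent (A₂ ∘ L₂) := by
  obtain ⟨hrange, hker₁⟩ := range_eq_and_disjoint_ker_of_add_eq hL₁ hL₂ hA₂ hω hpot hadd
  have hker₂ : Disjoint (span (ZMod p) (Set.range L₂)) (LinearMap.ker A₂) :=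
    hA₂.mono_right fun v hv => by simp [LinearMap.mem_ker.mp hv]
  have hb : Function.Injective (A₂ ∘ L₂) := fun l l' h =>
    hinj₂ (LinearMap.injOn_of_disjoint_ker subset_span hker₂ ⟨l, rfl⟩ ⟨l', rfl⟩ h)
  have hbω : ∀ l, A₂ (L₂ l) ∉ ω.support := fun l hl =>
    hne₂ l (disjoint_def.mp hA₂ _ (subset_span ⟨l, rfl⟩) (subset_span hl))
  have ha : Function.Injective (A₁ ∘ L₁) := by
    refine injective_of_monomialExponent_le_one fun x => ?_
    by_cases hx : x ∈ Set.range (A₂ ∘ L₂)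
    · obtain ⟨l, rfl⟩ := hx
      have hx := congrArg (· ((A₂ ∘ L₂) l)) hadd
      have hω0 : ω ((A₂ ∘ L₂) l) = 0 := Finsupp.notMem_support_iff.mp (hbω l)
      simp only [Finsupp.coe_add, Pi.add_apply, monomialExponent_apply_of_injective hb,
        Set.mem_range_self, if_true] at hx
      omega
    · rw [← hrange] at hx
      rw [Finsupp.notMem_support_iff.mp (by simpa [support_monomialExponent] using hx)]
      exact zero_le_one
  let σ : Fin m₁ ≃ Fin m₂ := (Equiv.ofInjective _ ha).trans
    ((Equiv.setCongr hrange).trans (Equiv.ofInjective _ hb).symm)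
  refine ⟨systemsIso_of_apply_eq hker₁ hker₂ σ fun l => ?_,
    monomialExponent_eq_of_range_eq ha hb hrange⟩
  exact (Equiv.apply_ofInjective_symm hb (Equiv.setCongr hrange (Equiv.ofInjective _ ha l))).symm

end Exponents

theorem applyLF_eq_linearCombination (n k : ℕ) (v : Fin k → ZMod p) (X : Fin k → Fin n → ZMod p) :
    applyLF p n k v X = Fintype.linearCombination (ZMod p) X v :=
  (Fintype.linearCombination_apply _ _ _).symm

theorem coeff_mul_tLPoly [NeZero p] (n k m : ℕ) (L : Fin m → Fin k → ZMod p)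
    (P : MvPolynomial (Fin n → ZMod p) ℂ) (M : (Fin n → ZMod p) →₀ ℕ) :
    coeff M (P * tLPoly p n k m L) = ((p : ℂ) ^ (n * k))⁻¹ *
      ∑ X : Fin k → Fin n → ZMod p,
        if monomialExponent (Fintype.linearCombination (ZMod p) X ∘ L) ≤ M then
          coeff (M - monomialExponent (Fintype.linearCombination (ZMod p) X ∘ L)) P
        else 0 := by
  simp only [tLPoly, applyLF_eq_linearCombination]
  simp only [← Function.comp_apply (f := Fintype.linearCombination (ZMod p) _) (g := L),
    prod_X_eq_monomial_monomialExponent]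
  rw [mul_left_comm, coeff_C_mul, Finset.mul_sum, coeff_sum]
  congr 1
  refine Finset.sum_congr rfl fun X _ => ?_
  rw [coeff_mul_monomial', mul_one]

section Family

variable {V : Type*} [AddCommGroup V] [Module (ZMod p) V] {k : ℕ} {kk mm : Fin k → ℕ}

def potential (L : ∀ i, Fin (mm i) → Fin (kk i) → ZMod p) (i : Fin k) (ω : V →₀ ℕ) : ℕ :=
  Set.finrank (ZMod p) (ω.support : Set V) + Set.finrank (ZMod p) (Set.range (L i))

variable [Fact p.Prime] [FiniteDimensional (ZMod p) V] [DecidableEq V]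

theorem eq_and_monomialExponent_eq_of_coeff_ne_zero {R : Type*} [CommSemiring R] {d : ℕ}
    {L : ∀ i, Fin (mm i) → Fin (kk i) → ZMod p}
    (hinj : ∀ i, Function.Injective (L i))
    (hconn : ∀ i, ConnectedSystem p (kk i) (mm i) (L i))
    (hiso : ∀ i j, i ≠ j → ¬ SystemsIso p (L i) (L j))
    (hrank : ∀ i, d < Set.finrank (ZMod p) (Set.range (L i)))
    {P : Fin k → MvPolynomial V R} {j : Fin k} {ω : V →₀ ℕ}
    (hωd : Set.finrank (ZMod p) (ω.support : Set V) ≤ d)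
    (hmax : ∀ i ω', potential L j ω < potential L i ω' → coeff ω' (P i) = 0)
    {A : (Fin (kk j) → ZMod p) →ₗ[ZMod p] V}
    (hA : Disjoint (span (ZMod p) (Set.range (L j)))
      ((span (ZMod p) (ω.support : Set V)).comap A))
    {i : Fin k} {A' : (Fin (kk i) → ZMod p) →ₗ[ZMod p] V}
    (hle : monomialExponent (A' ∘ L i) ≤ ω + monomialExponent (A ∘ L j))
    (hc : coeff (ω + monomialExponent (A ∘ L j) - monomialExponent (A' ∘ L i)) (P i) ≠ 0) :
    i = j ∧ monomialExponent (A' ∘ L i) = monomialExponent (A ∘ L j) := by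
  have hspan : span (ZMod p) (Set.range (L j)) ≠ ⊥ := fun h => by
    have := hrank j
    rw [Set.finrank, h, finrank_bot] at this
    omega
  obtain ⟨hsys, he⟩ := systemsIso_and_monomialExponent_eq_of_add_eq (hconn i) (hconn j)
    (hinj j) ((hconn j).ne_zero hspan) hA (by have := hrank i; omega)
    (not_lt.mp fun h => hc (hmax i _ h)) (tsub_add_cancel_of_le hle)
  exact ⟨by_contra fun h => hiso i j h hsys, he⟩

theorem coeff_eq_zero_of_forall_potential_lt {n d : ℕ}
    {L : ∀ i, Fin (mm i) → Fin (kk i) → ZMod p}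
    (hinj : ∀ i, Function.Injective (L i))
    (hconn : ∀ i, ConnectedSystem p (kk i) (mm i) (L i))
    (hiso : ∀ i j, i ≠ j → ¬ SystemsIso p (L i) (L j))
    {P : Fin k → MvPolynomial (Fin n → ZMod p) ℂ}
    (hdeg : ∀ i, (P i).totalDegree ≤ d)
    (hn : ∀ i, d + Set.finrank (ZMod p) (Set.range (L i)) < n)
    (hrank : ∀ i, d < Set.finrank (ZMod p) (Set.range (L i)))
    (hsum : ∑ i, P i * tLPoly p n (kk i) (mm i) (L i) = 0)
    {j : Fin k} {ω : (Fin n → ZMod p) →₀ ℕ}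
    (hmax : ∀ i ω', potential L j ω < potential L i ω' → coeff ω' (P i) = 0) :
    coeff ω (P j) = 0 := by
  by_contra hne
  have hωd : Set.finrank (ZMod p) (ω.support : Set (Fin n → ZMod p)) ≤ d :=
    (finrank_span_support_le_totalDegree (mem_support_iff.mpr hne)).trans (hdeg j)
  obtain ⟨A, hA⟩ := exists_linearMap_disjoint_comap (span (ZMod p) (Set.range (L j)))
    (span (ZMod p) (ω.support : Set (Fin n → ZMod p)))
    (by have := hn j; unfold Set.finrank at *; rw [finrank_fin_fun]; omega)
  set D := monomialExponent (A ∘ L j)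
  have hterm : ∀ i (X : Fin (kk i) → Fin n → ZMod p),
      (if monomialExponent (Fintype.linearCombination (ZMod p) X ∘ L i) ≤ ω + D then
        coeff (ω + D - monomialExponent (Fintype.linearCombination (ZMod p) X ∘ L i)) (P i)
      else 0) =
      if i = j ∧ monomialExponent (Fintype.linearCombination (ZMod p) X ∘ L i) = D then
        coeff ω (P j) else 0 := by
    intro i X
    split_ifs with hle h h
    · rw [h.2, add_tsub_cancel_right, h.1]
    · by_contra hc
      exact h (eq_and_monomialExponent_eq_of_coeff_ne_zero hinj hconn hiso hrank hωd hmax hA hle hc)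
    · exact absurd (h.2 ▸ le_add_self) hle
    · rfl
  have hcoeff := congrArg (coeff (ω + D)) hsum
  simp only [coeff_sum, coeff_mul_tLPoly, hterm, coeff_zero] at hcoeff
  rw [Finset.sum_eq_single j (fun i _ hi => by simp [hi]) (by simp)] at hcoeff
  simp only [true_and, ← Finset.sum_filter, Finset.sum_const, nsmul_eq_mul] at hcoeff
  have hX₀ : (fun s => A (Pi.single s 1)) ∈ Finset.univ.filter
      (fun X => monomialExponent (Fintype.linearCombination (ZMod p) X ∘ L j) = D) := by
    simp [Fintype.linearCombination_pi_single_eq, D]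
  refine mul_ne_zero (inv_ne_zero (pow_ne_zero _ (Nat.cast_ne_zero.mpr (NeZero.ne p))))
    (mul_ne_zero (Nat.cast_ne_zero.mpr (Finset.card_pos.mpr ⟨_, hX₀⟩).ne') hne) hcoeff

end Family

/-- Lemma 6.8: formal independence of `t_𝓛` over low-degree polynomials.
Let `𝓛_1, …, 𝓛_k` be pairwise non-isomorphic connected systems of linear forms, and let
`P_1, …, P_k` be polynomials of degree at most `d` in the variables `{f(x) : x ∈ F_p^n}`.
If `n > d + max_i dim span(𝓛_i)` and `dim span(𝓛_i) > d` for all `i`, then the formal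
identity `Σ_i P_i · t_{𝓛_i} = 0` forces `P_i = 0` for all `i`. -/
theorem statement17 (p : ℕ) [NeZero p] (hp : p.Prime) (k n d : ℕ) (kk mm : Fin k → ℕ)
    (L : ∀ i, Fin (mm i) → Fin (kk i) → ZMod p)
    (hinj : ∀ i, Function.Injective (L i))
    (hconn : ∀ i, ConnectedSystem p (kk i) (mm i) (L i))
    (hiso : ∀ i j, i ≠ j → ¬ SystemsIso p (L i) (L j))
    (P : Fin k → MvPolynomial (Fin n → ZMod p) ℂ)
    (hdeg : ∀ i, (P i).totalDegree ≤ d)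
    (hn : ∀ i, d + Module.finrank (ZMod p)
      (Submodule.span (ZMod p) (Set.range (L i))) < n)
    (hrank : ∀ i, d < Module.finrank (ZMod p)
      (Submodule.span (ZMod p) (Set.range (L i)))) :
    (∑ i, P i * tLPoly p n (kk i) (mm i) (L i)) = 0 → ∀ i, P i = 0 := by
  intro hsum
  have := Fact.mk hp
  by_contra! h
  obtain ⟨i₀, hi₀⟩ := h
  obtain ⟨ω₀, hω₀⟩ := ne_zero_iff.mp hi₀
  obtain ⟨⟨j, ω⟩, hjω, hmax⟩ := (Finset.univ.sigma fun i => (P i).support).exists_max_image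
    (fun x => potential L x.1 x.2)
    ⟨⟨i₀, ω₀⟩, Finset.mem_sigma.mpr ⟨Finset.mem_univ _, mem_support_iff.mpr hω₀⟩⟩
  refine mem_support_iff.mp (Finset.mem_sigma.mp hjω).2
    (coeff_eq_zero_of_forall_potential_lt hinj hconn hiso hdeg hn hrank hsum fun i ω' hlt => ?_)
  by_contra hω'
  exact (hmax ⟨i, ω'⟩ (mem_sigma.mpr ⟨mem_univ _, mem_support_iff.mpr hω'⟩)).not_gt hlt

end Paper
end
end
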